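/- arXiv:1506.01345 — 2 statements merged into one kernel-verified Lean document; each statement's English description precedes it below -/
import Mathlib

section
/- For every n ∈ ℕ, the number of pairs (σ, θ) ∈ NCP(2n)² with σ ∨ θ = 1_{2n} (join in NC(2n)) equals the number of irreducible meandric systems on 2n bridges, i.e., equals |{(π,ρ) ∈ NC(n)² : π ∨ ρ = 1_n and π ∧ ρ = 0_n}|. -/
open scoped Classical

/-- A setoid (partition) of `Fin n` is non-crossing if there is no crossing
`a < b < c < d` with `a ∼ c`, `b ∼ d` but `a` and `b` in distinct blocks. -/
def IsNC {n : ℕ} (S : Setoid (Fin n)) : Prop :=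
  ∀ a b c d : Fin n, a < b → b < c → c < d → S.r a c → S.r b d → S.r a b

/-- A partition is a pairing if every block has exactly two elements. -/
def IsPairing {m : ℕ} (T : Setoid (Fin m)) : Prop :=
  ∀ x : Fin m, ∃ y : Fin m, y ≠ x ∧ T.r x y ∧ ∀ z : Fin m, T.r x z → z = x ∨ z = y

/-- The block of `i` in the partition `S`, as a finset. -/
noncomputable def blockOf {n : ℕ} (S : Setoid (Fin n)) (i : Fin n) : Finset (Fin n) :=
  Finset.univ.filter (fun j => S.r i j)

lemma blockOf_nonempty {n : ℕ} (S : Setoid (Fin n)) (i : Fin n) :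
    (blockOf S i).Nonempty :=
  ⟨i, by simp [blockOf, S.iseqv.refl i]⟩

/-- The permutation `P_S` which performs an increasing cycle on every block of `S`:
it sends `i` to the next larger element of its block, or to the minimum of the
block if `i` is the largest element of its block. -/
noncomputable def nextP {n : ℕ} (S : Setoid (Fin n)) (i : Fin n) : Fin n :=
  if h : ((blockOf S i).filter (fun j => i < j)).Nonempty
  then ((blockOf S i).filter (fun j => i < j)).min' h
  else (blockOf S i).min' (blockOf_nonempty S i)

/-- The inverse permutation `P_S⁻¹` (decreasing cycle on every block of `S`). -/
noncomputable def prevP {n : ℕ} (S : Setoid (Fin n)) (i : Fin n) : Fin n :=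
  if h : ((blockOf S i).filter (fun j => j < i)).Nonempty
  then ((blockOf S i).filter (fun j => j < i)).max' h
  else (blockOf S i).max' (blockOf_nonempty S i)

/-- `0`-indexed version of the point `2i-1` of `{1,…,2n}`. -/
def dEven {n : ℕ} (j : Fin n) : Fin (2*n) := ⟨2*j.val, by have := j.isLt; omega⟩

/-- `0`-indexed version of the point `2i` of `{1,…,2n}`. -/
def dOdd {n : ℕ} (j : Fin n) : Fin (2*n) := ⟨2*j.val+1, by have := j.isLt; omega⟩

/-- The doubling construction `π ↦ A(π)`: the pairing of `{1,…,2n}` generated by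
pairing each point `2i` with `2P_π(i) - 1`, so that the associated permutation
satisfies `P_{A(π)}(2i) = 2P_π(i) - 1` and `P_{A(π)}(2i-1) = 2P_π⁻¹(i)`. -/
noncomputable def archSetoid {n : ℕ} (S : Setoid (Fin n)) : Setoid (Fin (2*n)) :=
  Relation.EqvGen.setoid (fun a b => ∃ j : Fin n, a = dOdd j ∧ b = dEven (nextP S j))

/-- The meandric system permutation `M_{π,ρ} ∈ S_{2n}`, defined by
`M_{π,ρ}(2i-1) = 2P_π⁻¹(i)` and `M_{π,ρ}(2i) = 2P_ρ(i) - 1` (here `0`-indexed). -/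
noncomputable def meanderMap {n : ℕ} (π ρ : Setoid (Fin n)) (x : Fin (2*n)) : Fin (2*n) :=
  if x.val % 2 = 0
  then dOdd (prevP π ⟨x.val / 2, by have := x.isLt; omega⟩)
  else dEven (nextP ρ ⟨x.val / 2, by have := x.isLt; omega⟩)

/-- The orbit partition of a map. -/
def orbitSetoid {m : ℕ} (f : Fin m → Fin m) : Setoid (Fin m) :=
  Relation.EqvGen.setoid (fun a b => f a = b)

/-- Number of orbits of a map. -/
noncomputable def numOrbits {m : ℕ} (f : Fin m → Fin m) : ℕ :=
  Nat.card (Quotient (orbitSetoid f))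

/-- `S` is a union of blocks of the partition `T`. -/
def IsBlockUnion {m : ℕ} (T : Setoid (Fin m)) (S : Set (Fin m)) : Prop :=
  ∀ x ∈ S, ∀ y, T.r x y → y ∈ S

/-- `S` is invariant under `f`. -/
def MInvariant {m : ℕ} (f : Fin m → Fin m) (S : Set (Fin m)) : Prop :=
  ∀ x ∈ S, f x ∈ S

/-- The meandric system `M_{π,ρ}` is reducible: some proper subinterval
`{a,…,b}` of `{1,…,2n}` is invariant under `M_{π,ρ}`. -/
noncomputable def Reducible {n : ℕ} (π ρ : Setoid (Fin n)) : Prop :=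
  ∃ a b : Fin (2*n), a ≤ b ∧ b.val - a.val < 2*n - 1 ∧
    MInvariant (meanderMap π ρ) {x | a ≤ x ∧ x ≤ b}

/-- The join in the lattice of non-crossing partitions: the smallest
non-crossing partition above both `π` and `ρ`. -/
noncomputable def ncJoin {m : ℕ} (π ρ : Setoid (Fin m)) : Setoid (Fin m) :=
  sInf {τ | IsNC τ ∧ π ≤ τ ∧ ρ ≤ τ}

/-- The moment-cumulant formula of free probability: `mom n` is the sum over all
non-crossing partitions of `{1,…,n}` of the products of cumulants `κ` indexed
by the block sizes.  This uniquely determines the free cumulants `κ n`, `n ≥ 1`,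
of a sequence of moments. -/
def MomCum {F : Type*} [Field F] (mom κ : ℕ → F) : Prop :=
  ∀ n : ℕ, 0 < n →
    mom n = ∑ᶠ S ∈ {S : Setoid (Fin n) | IsNC S}, ∏ᶠ B ∈ Setoid.classes S, κ B.ncard

/-- The number of irreducible meandric systems on `2k` bridges, described as the
number of pairs `(π,ρ) ∈ NC(k)²` with `π ∨ ρ = 1_k`, `π ∧ ρ = 0_k`. -/
noncomputable def mirr (k : ℕ) : ℕ :=
  Nat.card {pr : Setoid (Fin k) × Setoid (Fin k) //
    IsNC pr.1 ∧ IsNC pr.2 ∧ ncJoin pr.1 pr.2 = ⊤ ∧ pr.1 ⊓ pr.2 = ⊥}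

/-- The number of pairs `(π,ρ) ∈ NC(n)²` whose meandric system `M_{π,ρ}` has
exactly `k` orbits (connected components). -/
noncomputable def mcount (n k : ℕ) : ℕ :=
  Nat.card {pr : Setoid (Fin n) × Setoid (Fin n) //
    IsNC pr.1 ∧ IsNC pr.2 ∧ numOrbits (meanderMap pr.1 pr.2) = k}

/-- The number of meanders on `2n` bridges. -/
noncomputable def meanderNum (n : ℕ) : ℕ := mcount n 1

/-!
The doubling `A = archSetoid` is a bijection `NC(n) → NCP(2n)`. Its inverse sends a non-crossing
pairing `σ` to the orbit partition of the map `j ↦ k` for which `2j+1` is paired with `2k`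
(`0`-indexed); since the arcs of `σ` do not cross, this map runs increasingly through each orbit
and wraps around once, so it is the cycle map `nextP` of its orbit partition.

A non-crossing partition other than `1` has a block that is a proper interval, and a proper
interval `I` that is a union of blocks of `σ` and of `θ` puts both below the non-crossing
partition `{I, Iᶜ}`; so `σ ∨ θ ≠ 1` iff some proper interval is a union of blocks of both. For
`σ = A(π)`, `θ = A(ρ)` such an interval has even length: either it is `[2a, 2b+1]`, which is a union of blocks of `A(π)`
iff `[a, b]` is one of `π`, giving `π ∨ ρ ≠ 1`; or it is `[2s+1, 2t]`, which is a union of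
blocks of `A(π)` iff `s ∼_π t`, giving `π ∧ ρ ≠ 0`.
-/

section NextP

variable {n : ℕ} (S : Setoid (Fin n)) {i j k l : Fin n}

@[simp] lemma mem_blockOf : j ∈ blockOf S i ↔ S.r i j := by
  simp [blockOf]

lemma nextP_spec (i : Fin n) :
    S.r i (nextP S i) ∧
      ((i < nextP S i ∧ ∀ l, S.r i l → i < l → nextP S i ≤ l) ∨
       ((∀ l, S.r i l → l ≤ i) ∧ ∀ l, S.r i l → nextP S i ≤ l)) := by
  unfold nextP
  split_ifs with h
  · have hm := Finset.min'_mem _ h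
    simp only [Finset.mem_filter, mem_blockOf] at hm
    exact ⟨hm.1, Or.inl ⟨hm.2, fun l hl hil => Finset.min'_le _ _ (by simp [hl, hil])⟩⟩
  · refine ⟨(mem_blockOf S).1 (Finset.min'_mem _ _), Or.inr ⟨fun l hl => ?_,
      fun l hl => Finset.min'_le _ _ ((mem_blockOf S).2 hl)⟩⟩
    by_contra hc
    exact h ⟨l, by simp [hl, lt_of_not_ge hc]⟩

lemma prevP_spec (i : Fin n) :
    S.r i (prevP S i) ∧
      ((prevP S i < i ∧ ∀ l, S.r i l → l < i → l ≤ prevP S i) ∨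
       ((∀ l, S.r i l → i ≤ l) ∧ ∀ l, S.r i l → l ≤ prevP S i)) := by
  unfold prevP
  split_ifs with h
  · have hm := Finset.max'_mem _ h
    simp only [Finset.mem_filter, mem_blockOf] at hm
    exact ⟨hm.1, Or.inl ⟨hm.2, fun l hl hil => Finset.le_max' _ _ (by simp [hl, hil])⟩⟩
  · refine ⟨(mem_blockOf S).1 (Finset.max'_mem _ _), Or.inr ⟨fun l hl => ?_,
      fun l hl => Finset.le_max' _ _ ((mem_blockOf S).2 hl)⟩⟩
    by_contra hc
    exact h ⟨l, by simp [hl, lt_of_not_ge hc]⟩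

lemma rel_nextP (i : Fin n) : S.r i (nextP S i) := (nextP_spec S i).1

lemma rel_prevP (i : Fin n) : S.r i (prevP S i) := (prevP_spec S i).1

lemma nextP_mem_Ioc (hil : i < l) (hl : S.r i l) : nextP S i ∈ Set.Ioc i l := by
  rcases (nextP_spec S i).2 with ⟨hlt, hmin⟩ | ⟨hmax, -⟩
  · exact ⟨hlt, hmin l hl hil⟩
  · exact absurd (hmax l hl) (not_le.2 hil)

lemma mem_Icc_of_nextP_le (h : nextP S i ≤ i) (hl : S.r i l) : l ∈ Set.Icc (nextP S i) i := by
  rcases (nextP_spec S i).2 with ⟨hlt, -⟩ | ⟨hmax, hmin⟩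
  · exact absurd h (not_le.2 hlt)
  · exact ⟨hmin l hl, hmax l hl⟩

lemma prevP_mem_Ico (hli : l < i) (hl : S.r i l) : prevP S i ∈ Set.Ico l i := by
  rcases (prevP_spec S i).2 with ⟨hlt, hmax⟩ | ⟨hmin, -⟩
  · exact ⟨hmax l hl hli, hlt⟩
  · exact absurd (hmin l hl) (not_le.2 hli)

lemma mem_Icc_of_le_prevP (h : i ≤ prevP S i) (hl : S.r i l) : l ∈ Set.Icc i (prevP S i) := by
  rcases (prevP_spec S i).2 with ⟨hlt, -⟩ | ⟨hmin, hmax⟩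
  · exact absurd h (not_le.2 hlt)
  · exact ⟨hmin l hl, hmax l hl⟩

lemma prevP_nextP (i : Fin n) : prevP S (nextP S i) = i := by
  have hrel : S.r (nextP S i) i := S.symm (rel_nextP S i)
  have hrel' : S.r i (prevP S (nextP S i)) := S.trans (rel_nextP S i) (rel_prevP S _)
  rcases lt_or_ge i (nextP S i) with hlt | hle
  · obtain ⟨hle, hlt'⟩ := prevP_mem_Ico S hlt hrel
    refine le_antisymm (not_lt.1 fun h => ?_) hle
    exact hlt'.not_ge (nextP_mem_Ioc S h hrel').2
  · have hmem := mem_Icc_of_nextP_le S hle hrel'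
    rcases le_or_gt (nextP S i) (prevP S (nextP S i)) with h | h
    · exact le_antisymm hmem.2 (mem_Icc_of_le_prevP S h hrel).2
    · exact absurd hmem.1 (not_le.2 h)

lemma nextP_bijective : Function.Bijective (nextP S) :=
  Finite.injective_iff_bijective.1 (Function.LeftInverse.injective (prevP_nextP S))

lemma nextP_prevP (i : Fin n) : nextP S (prevP S i) = i :=
  Function.LeftInverse.rightInverse_of_surjective (prevP_nextP S) (nextP_bijective S).2 i

lemma nextP_eq_of_lt (hjk : j < k) (hr : S.r j k) (h : ∀ l, S.r j l → l ∉ Set.Ioo j k) :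
    nextP S j = k := by
  obtain ⟨hlt, hle⟩ := nextP_mem_Ioc S hjk hr
  exact hle.eq_or_lt.resolve_right fun h' => h _ (rel_nextP S j) ⟨hlt, h'⟩

lemma nextP_eq_of_forall_mem_Icc (hr : S.r j k) (h : ∀ l, S.r j l → l ∈ Set.Icc k j) :
    nextP S j = k := by
  rcases le_or_gt (nextP S j) j with hle | hlt
  · exact le_antisymm (mem_Icc_of_nextP_le S hle hr).1 (h _ (rel_nextP S j)).1
  · exact absurd (h _ (rel_nextP S j)).2 (not_le.2 hlt)

lemma rel_of_mapsTo_nextP (hjk : j ≤ k) (h : Set.MapsTo (nextP S) (Set.Ico j k) (Set.Ioc j k)) :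
    S.r j k := by
  obtain ⟨l, hl, hlmax⟩ :=
    Finset.exists_max_image ((blockOf S j).filter (· ≤ k)) id ⟨j, by simp [hjk]⟩
  simp only [Finset.mem_filter, mem_blockOf, id] at hl hlmax
  rcases hl.2.eq_or_lt with rfl | hlt
  · exact hl.1
  obtain ⟨hjn, hnk⟩ := h ⟨hlmax j ⟨S.refl j, hjk⟩, hlt⟩
  have hwrap : nextP S l ≤ l := hlmax _ ⟨S.trans hl.1 (rel_nextP S l), hnk⟩
  exact absurd (mem_Icc_of_nextP_le S hwrap (S.symm hl.1)).1 (not_le.2 hjn)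

lemma isBlockUnion_of_mapsTo_nextP {A : Set (Fin n)} (h : Set.MapsTo (nextP S) A A) :
    IsBlockUnion S A := by
  -- `nextP` climbs from `x` through the larger elements of its block, then wraps to the minimum
  have up : ∀ z x, x ∈ A → S.r x z → x ≤ z → z ∈ A := by
    intro z
    induction z using WellFoundedLT.induction with
    | _ z ih =>
      intro x hx hxz hle
      rcases hle.eq_or_lt with rfl | hlt
      · exact hx
      obtain ⟨hxp, hpz⟩ := prevP_mem_Ico S hlt (S.symm hxz)
      have hp := ih _ hpz x hx (S.trans hxz (rel_prevP S z)) hxp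
      simpa only [nextP_prevP] using h hp
  intro x hx y hxy
  obtain ⟨b, hb, hbmax⟩ := Finset.exists_max_image (blockOf S x) id (⟨x, by simp⟩)
  rw [mem_blockOf] at hb
  have hbA := up b x hx hb (hbmax x (by simp))
  have hwrap : nextP S b ≤ b := hbmax _ ((mem_blockOf S).2 (S.trans hb (rel_nextP S b)))
  exact up y _ (h hbA) (S.trans (S.symm (rel_nextP S b)) (S.trans (S.symm hb) hxy))
    (mem_Icc_of_nextP_le S hwrap (S.trans (S.symm hb) hxy)).1

lemma isBlockUnion_iff_forall_nextP {A : Set (Fin n)} :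
    IsBlockUnion S A ↔ ∀ j, j ∈ A ↔ nextP S j ∈ A :=
  ⟨fun h j => ⟨fun hj => h j hj _ (rel_nextP S j), fun hj => h _ hj j (S.symm (rel_nextP S j))⟩,
    fun h => isBlockUnion_of_mapsTo_nextP S fun j hj => (h j).1 hj⟩

lemma le_of_nextP_eq {T : Setoid (Fin n)} (h : nextP S = nextP T) : S ≤ T :=
  Setoid.le_def.2 fun {x y} hxy => isBlockUnion_of_mapsTo_nextP S (A := {z | T.r x z})
    (fun j hj => h ▸ T.trans hj (rel_nextP T j)) x (T.refl x) y hxy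

lemma eq_of_nextP_eq {T : Setoid (Fin n)} (h : nextP S = nextP T) : S = T :=
  le_antisymm (le_of_nextP_eq S h) (le_of_nextP_eq T h.symm)

end NextP

section Intervals

variable {m : ℕ} {S π ρ : Setoid (Fin m)} {x y j l : Fin m}

lemma IsBlockUnion.of_le {A : Set (Fin m)} (hA : IsBlockUnion S A) (h : π ≤ S) :
    IsBlockUnion π A :=
  fun x hx y hxy => hA x hx y (h hxy)

lemma IsBlockUnion.le_ker {A : Set (Fin m)} (hA : IsBlockUnion S A) :
    S ≤ Setoid.ker (· ∈ A) :=
  fun x y hxy => propext ⟨fun hx => hA x hx y hxy, fun hy => hA y hy x (S.symm hxy)⟩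

lemma IsNC.mem_Ioo_of_rel (hS : IsNC S) (hxy : S.r x y) (hxj : ¬ S.r x j)
    (hj : j ∈ Set.Ioo x y) (hl : S.r j l) : l ∈ Set.Ioo x y := by
  refine ⟨lt_of_not_ge fun hle => hxj ?_, lt_of_not_ge fun hle => hxj ?_⟩
  · rcases hle.eq_or_lt with rfl | hlt
    · exact S.symm hl
    · exact S.trans (S.symm (hS l x j y hlt hj.1 hj.2 (S.symm hl) hxy)) (S.symm hl)
  · rcases hle.eq_or_lt with rfl | hlt
    · exact S.trans hxy (S.symm hl)
    · exact hS x j y l hj.1 hj.2 hlt hxy hl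

lemma IsNC.isBlockUnion_Icc_prevP (hS : IsNC S) (h : j ≤ prevP S j) :
    IsBlockUnion S (Set.Icc j (prevP S j)) := by
  intro x hx y hxy
  by_cases hjx : S.r j x
  · exact mem_Icc_of_le_prevP S h (S.trans hjx hxy)
  · have hx' : x ∈ Set.Ioo j (prevP S j) :=
      ⟨hx.1.lt_of_ne fun h => hjx (h ▸ S.refl j),
        hx.2.lt_of_ne fun h => hjx (h ▸ rel_prevP S j)⟩
    exact Set.Ioo_subset_Icc_self (hS.mem_Ioo_of_rel (rel_prevP S j) hjx hx' hxy)

lemma IsNC.isBlockUnion_Icc_of_isPairing (hS : IsNC S) (hP : IsPairing S) (hlt : x < y)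
    (hxy : S.r x y) : IsBlockUnion S (Set.Icc x y) := by
  intro z hz w hzw
  by_cases hxz : S.r x z
  · obtain ⟨p, -, -, hp⟩ := hP x
    have hy : y = p := (hp y hxy).resolve_left hlt.ne'
    rcases hp w (S.trans hxz hzw) with rfl | rfl
    · exact Set.left_mem_Icc.2 hlt.le
    · exact hy ▸ Set.right_mem_Icc.2 hlt.le
  · have hz' : z ∈ Set.Ioo x y :=
      ⟨hz.1.lt_of_ne fun h => hxz (h ▸ S.refl x), hz.2.lt_of_ne fun h => hxz (h ▸ hxy)⟩
    exact Set.Ioo_subset_Icc_self (hS.mem_Ioo_of_rel hxy hxz hz' hzw)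

lemma IsNC.mem_Ico_iff_nextP_mem_Ioc (hS : IsNC S) (hr : S.r x y) :
    j ∈ Set.Ico x y ↔ nextP S j ∈ Set.Ioc x y := by
  constructor
  · rintro ⟨hxj, hjy⟩
    by_cases hj : S.r x j
    · exact Set.Ioc_subset_Ioc_left hxj (nextP_mem_Ioc S hjy (S.trans (S.symm hj) hr))
    · exact Set.Ioo_subset_Ioc_self (hS.mem_Ioo_of_rel hr hj
        ⟨hxj.lt_of_ne fun h => hj (h ▸ S.refl x), hjy⟩ (rel_nextP S j))
  · rintro ⟨hxk, hky⟩
    by_cases hk : S.r x (nextP S j)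
    · have hjx : S.r j x := S.symm (S.trans hk (S.symm (rel_nextP S j)))
      have hjk : j < nextP S j := lt_of_not_ge fun hle =>
        absurd (mem_Icc_of_nextP_le S hle hjx).1 (not_le.2 hxk)
      refine ⟨not_lt.1 fun hjx' => ?_, hjk.trans_le hky⟩
      exact absurd (nextP_mem_Ioc S hjx' hjx).2 (not_le.2 hxk)
    · have hk' : nextP S j ∈ Set.Ioo x y := ⟨hxk, hky.lt_of_ne fun h => hk (h ▸ hr)⟩
      exact Set.Ioo_subset_Ico_self (hS.mem_Ioo_of_rel hr hk hk' (S.symm (rel_nextP S j)))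

lemma isNC_of_isBlockUnion_Icc (h : ∀ x y, x < y → S.r x y → IsBlockUnion S (Set.Icc x y)) :
    IsNC S := fun a b c d hab hbc hcd hac hbd =>
  absurd (h a c (hab.trans hbc) hac b ⟨hab.le, hbc.le⟩ d hbd).2 (not_le.2 hcd)

/-- The crossing `a < b < c < d` is detected at the step `u ↦ nextP S u` of the block of `a`
that jumps over `b`. -/
lemma isNC_of_isBlockUnion_Ioo_nextP
    (h : ∀ u, u < nextP S u → IsBlockUnion S (Set.Ioo u (nextP S u))) : IsNC S := by
  intro a b c d hab hbc hcd hac hbd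
  by_contra hab'
  obtain ⟨u, hu, humax⟩ := Finset.exists_max_image
    ((blockOf S a).filter (· < b)) id ⟨a, by simp [hab]⟩
  simp only [Finset.mem_filter, mem_blockOf, id] at hu humax
  have hnext := nextP_mem_Ioc S (hu.2.trans hbc) (S.trans (S.symm hu.1) hac)
  have hav : S.r a (nextP S u) := S.trans hu.1 (rel_nextP S u)
  have hbv : b < nextP S u := by
    refine lt_of_le_of_ne (not_lt.1 fun hlt => ?_) fun he => hab' (he ▸ hav)
    exact absurd (humax _ ⟨hav, hlt⟩) (not_le.2 hnext.1)
  have hd := h u hnext.1 b ⟨hu.2, hbv⟩ d hbd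
  exact absurd (hd.2.trans_le hnext.2) (not_lt.2 hcd.le)

lemma isNC_ker_mem {A : Set (Fin m)} (hA : A.OrdConnected) : IsNC (Setoid.ker (· ∈ A)) := by
  intro p q r s hpq hqr hrs hpr hqs
  simp only [Setoid.ker_def, eq_iff_iff] at hpr hqs ⊢
  exact ⟨fun hp => hA.out hp (hpr.1 hp) ⟨hpq.le, hqr.le⟩,
    fun hq => hpr.2 (hA.out hq (hqs.1 hq) ⟨hqr.le, hrs.le⟩)⟩

lemma IsNC.exists_block_eq_Icc (hS : IsNC S) (hm : 0 < m) :
    ∃ i a b : Fin m, ∀ x, S.r i x ↔ x ∈ Set.Icc a b := by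
  let lo : Fin m → Fin m := fun i => (blockOf S i).min' ⟨i, by simp⟩
  let hi : Fin m → Fin m := fun i => (blockOf S i).max' ⟨i, by simp⟩
  have hlo : ∀ i, S.r i (lo i) := fun i => (mem_blockOf S).1 (Finset.min'_mem _ _)
  have hhi : ∀ i, S.r i (hi i) := fun i => (mem_blockOf S).1 (Finset.max'_mem _ _)
  have hspan : ∀ i x, S.r i x → x ∈ Set.Icc (lo i) (hi i) := fun i x hx =>
    ⟨Finset.min'_le _ _ ((mem_blockOf S).2 hx), Finset.le_max' _ _ ((mem_blockOf S).2 hx)⟩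
  obtain ⟨i, -, hmin⟩ := Finset.exists_min_image Finset.univ
    (fun i => (Finset.Icc (lo i) (hi i)).card) ⟨⟨0, hm⟩, Finset.mem_univ _⟩
  refine ⟨i, lo i, hi i, fun x => ⟨hspan i x, fun hx => by_contra fun hix => ?_⟩⟩
  -- otherwise the block of `x` lies strictly inside the span of the block of `i`
  have hlox : ¬ S.r (lo i) x := fun h => hix (S.trans (hlo i) h)
  have hx' : x ∈ Set.Ioo (lo i) (hi i) :=
    ⟨hx.1.lt_of_ne fun h => hlox (h ▸ S.refl _), hx.2.lt_of_ne fun h => hix (h ▸ hhi i)⟩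
  have hinner : ∀ y, S.r x y → y ∈ Set.Ioo (lo i) (hi i) := fun y =>
    hS.mem_Ioo_of_rel (S.trans (S.symm (hlo i)) (hhi i)) hlox hx'
  have hsub : Finset.Icc (lo x) (hi x) ⊂ Finset.Icc (lo i) (hi i) := by
    refine (Finset.ssubset_iff_of_subset (Finset.Icc_subset_Icc (hinner _ (hlo x)).1.le
      (hinner _ (hhi x)).2.le)).2 ⟨lo i, Finset.left_mem_Icc.2 (hx.1.trans hx.2), fun h => ?_⟩
    exact absurd (Finset.mem_Icc.1 h).1 (not_le.2 (hinner _ (hlo x)).1)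
  exact absurd (hmin x (Finset.mem_univ x)) (not_le.2 (Finset.card_lt_card hsub))

lemma IsNC.exists_isBlockUnion_Icc (hS : IsNC S) (hne : S ≠ ⊤) :
    ∃ a b : Fin m, a ≤ b ∧ (0 < (a : ℕ) ∨ (b : ℕ) + 1 < m) ∧ IsBlockUnion S (Set.Icc a b) := by
  obtain ⟨u, v, huv⟩ : ∃ u v, ¬ S.r u v := by
    by_contra! h
    exact hne (Setoid.eq_top_iff.2 h)
  obtain ⟨i, a, b, hblock⟩ := hS.exists_block_eq_Icc (Fin.pos u)
  have hi := (hblock i).1 (S.refl i)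
  refine ⟨a, b, hi.1.trans hi.2, ?_, fun x hx y hxy => (hblock y).1 (S.trans ((hblock x).2 hx) hxy)⟩
  by_contra! hab
  have hall : ∀ z : Fin m, S.r i z := fun z =>
    (hblock z).2 ⟨Fin.le_def.2 (by omega), Fin.le_def.2 (by omega)⟩
  exact huv (S.trans (S.symm (hall u)) (hall v))

lemma isNC_ncJoin (π ρ : Setoid (Fin m)) : IsNC (ncJoin π ρ) :=
  fun a b c d hab hbc hcd hac hbd τ hτ => hτ.1 a b c d hab hbc hcd (hac τ hτ) (hbd τ hτ)

lemma le_ncJoin_left (π ρ : Setoid (Fin m)) : π ≤ ncJoin π ρ :=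
  le_sInf fun _ hτ => hτ.2.1

lemma le_ncJoin_right (π ρ : Setoid (Fin m)) : ρ ≤ ncJoin π ρ :=
  le_sInf fun _ hτ => hτ.2.2

lemma ncJoin_le {τ : Setoid (Fin m)} (hτ : IsNC τ) (hπ : π ≤ τ) (hρ : ρ ≤ τ) : ncJoin π ρ ≤ τ :=
  sInf_le ⟨hτ, hπ, hρ⟩

lemma ncJoin_ne_top_iff : ncJoin π ρ ≠ ⊤ ↔ ∃ a b : Fin m, a ≤ b ∧ (0 < (a : ℕ) ∨ (b : ℕ) + 1 < m) ∧
    IsBlockUnion π (Set.Icc a b) ∧ IsBlockUnion ρ (Set.Icc a b) := by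
  constructor
  · intro hne
    obtain ⟨a, b, hab, hproper, hJ⟩ := (isNC_ncJoin π ρ).exists_isBlockUnion_Icc hne
    exact ⟨a, b, hab, hproper, hJ.of_le (le_ncJoin_left π ρ), hJ.of_le (le_ncJoin_right π ρ)⟩
  · rintro ⟨a, b, hab, hproper, hπ, hρ⟩ htop
    have hle := ncJoin_le (isNC_ker_mem Set.ordConnected_Icc) hπ.le_ker hρ.le_ker
    rw [htop, top_le_iff, Setoid.eq_top_iff] at hle
    have hc : ∃ c : Fin m, c ∉ Set.Icc a b := by
      rcases hproper with h | h
      · exact ⟨⟨0, by omega⟩, fun hc => absurd (Fin.le_def.1 hc.1) (by simp; omega)⟩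
      · exact ⟨⟨m - 1, by omega⟩, fun hc => absurd (Fin.le_def.1 hc.2) (by simp; omega)⟩
    obtain ⟨c, hc⟩ := hc
    exact hc ((Setoid.ker_def.1 (hle a c)) ▸ ⟨le_rfl, hab⟩)

lemma inf_ne_bot_iff : π ⊓ ρ ≠ ⊥ ↔ ∃ x y : Fin m, x < y ∧ π.r x y ∧ ρ.r x y := by
  constructor
  · intro h
    by_contra! hc
    refine h (Setoid.ext fun x y => ⟨fun hxy => ?_, fun hxy => hxy ▸ (π ⊓ ρ).refl x⟩)
    rcases lt_trichotomy x y with hlt | rfl | hgt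
    · exact absurd hxy.2 (hc x y hlt hxy.1)
    · rfl
    · exact absurd (ρ.symm hxy.2) (hc y x hgt (π.symm hxy.1))
  · rintro ⟨x, y, hlt, hπ, hρ⟩ hbot
    have hxy : (π ⊓ ρ).r x y := ⟨hπ, hρ⟩
    rw [hbot] at hxy
    exact hlt.ne hxy

end Intervals

lemma even_card_of_involutive {α : Type*} [DecidableEq α] {f : α → α}
    (hf : Function.Involutive f) (hfix : ∀ x, f x ≠ x) {s : Finset α} (hs : ∀ x ∈ s, f x ∈ s) :
    Even s.card := by
  let g : Function.End s := fun x => ⟨f x, hs x x.2⟩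
  have hg : g ^ 2 ^ 1 = 1 := by
    funext x
    exact Subtype.ext (hf x)
  have hmod := Equiv.Perm.card_fixedPoints_modEq (p := 2) hg
  have hnone : Fintype.card (Function.fixedPoints g) = 0 :=
    Fintype.card_eq_zero_iff.2 ⟨fun x => hfix x.1 (congrArg Subtype.val x.2)⟩
  rw [hnone, Fintype.card_coe] at hmod
  exact Nat.even_iff.2 hmod

section Pairing

variable {m : ℕ} {T : Setoid (Fin m)} {x y : Fin m}

noncomputable def partner (hT : IsPairing T) (x : Fin m) : Fin m := (hT x).choose

lemma partner_ne (hT : IsPairing T) (x : Fin m) : partner hT x ≠ x := (hT x).choose_spec.1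

lemma rel_partner (hT : IsPairing T) (x : Fin m) : T.r x (partner hT x) := (hT x).choose_spec.2.1

lemma rel_iff_partner (hT : IsPairing T) : T.r x y ↔ y = x ∨ y = partner hT x :=
  ⟨(hT x).choose_spec.2.2 y, by rintro (rfl | rfl); exacts [T.refl _, rel_partner hT x]⟩

lemma partner_involutive (hT : IsPairing T) : Function.Involutive (partner hT) := fun x =>
  (((rel_iff_partner hT).1 (T.symm (rel_partner hT x))).resolve_left (partner_ne hT x).symm).symm

lemma IsPairing.val_mod_two_ne (hT : IsPairing T) {a b : Fin m} (hab : a ≤ b)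
    (hA : IsBlockUnion T (Set.Icc a b)) : (a : ℕ) % 2 ≠ (b : ℕ) % 2 := by
  have heven := even_card_of_involutive (partner_involutive hT) (partner_ne hT)
    (s := Finset.Icc a b) fun z hz => by
      simpa using hA z (by simpa using hz) _ (rel_partner hT z)
  rw [Fin.card_Icc, Nat.even_iff] at heven
  have := Fin.le_def.1 hab
  omega

lemma IsNC.val_mod_two_ne_of_isPairing (hT : IsNC T) (hP : IsPairing T) (hxy : T.r x y)
    (hne : x ≠ y) : (x : ℕ) % 2 ≠ (y : ℕ) % 2 := by
  rcases hne.lt_or_gt with hlt | hlt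
  · exact hP.val_mod_two_ne hlt.le (hT.isBlockUnion_Icc_of_isPairing hP hlt hxy)
  · exact (hP.val_mod_two_ne hlt.le (hT.isBlockUnion_Icc_of_isPairing hP hlt (T.symm hxy))).symm

end Pairing

section Orbits

variable {m : ℕ} {f : Fin m → Fin m} {x y : Fin m}

lemma isBlockUnion_orbitSetoid (hf : Function.Injective f) {A : Set (Fin m)}
    (hA : Set.MapsTo f A A) : IsBlockUnion (orbitSetoid f) A := by
  have hback : ∀ a, f a ∈ A → a ∈ A := fun a ha => by
    obtain ⟨c, hc, hca⟩ := ((A.toFinite.injOn_iff_bijOn_of_mapsTo hA).1 hf.injOn).surjOn ha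
    exact hf hca ▸ hc
  have key : ∀ x y, (orbitSetoid f).r x y → (x ∈ A ↔ y ∈ A) := by
    intro x y hxy
    induction hxy with
    | rel a b hab => exact hab ▸ ⟨fun h => hA h, hback a⟩
    | refl a => exact Iff.rfl
    | symm a b _ ih => exact ih.symm
    | trans a b c _ _ ih₁ ih₂ => exact ih₁.trans ih₂
  exact fun x hx y hxy => (key x y hxy).1 hx

lemma orbitSetoid_rel_iff (hf : Function.Involutive f) :
    (orbitSetoid f).r x y ↔ y = x ∨ y = f x := by
  refine ⟨fun h => ?_, by rintro (rfl | rfl); exacts [(orbitSetoid f).refl _, .rel _ _ rfl]⟩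
  induction h with
  | rel a b hab => exact Or.inr hab.symm
  | refl a => exact Or.inl rfl
  | symm a b _ ih => rcases ih with rfl | rfl <;> simp [hf _]
  | trans a b c _ _ ih₁ ih₂ =>
    rcases ih₁ with rfl | rfl <;> rcases ih₂ with rfl | rfl <;> simp [hf _]

lemma isPairing_orbitSetoid (hf : Function.Involutive f) (hfix : ∀ x, f x ≠ x) :
    IsPairing (orbitSetoid f) := fun x =>
  ⟨f x, hfix x, (orbitSetoid_rel_iff hf).2 (Or.inr rfl),
    fun _ hz => (orbitSetoid_rel_iff hf).1 hz⟩

end Orbits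

section Doubling

variable {n : ℕ} (S : Setoid (Fin n)) {x y : Fin (2*n)}

@[simp] lemma val_dEven (j : Fin n) : (dEven j : ℕ) = 2 * j := rfl

@[simp] lemma val_dOdd (j : Fin n) : (dOdd j : ℕ) = 2 * j + 1 := rfl

lemma dOdd_lt_dEven_iff {j k : Fin n} : dOdd j < dEven k ↔ j < k := by
  simp only [Fin.lt_def, val_dOdd, val_dEven]
  omega

lemma dEven_lt_dOdd_iff {j k : Fin n} : dEven j < dOdd k ↔ j ≤ k := by
  simp only [Fin.lt_def, Fin.le_def, val_dOdd, val_dEven]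
  omega

lemma dEven_or_dOdd (x : Fin (2*n)) : (∃ j, dEven j = x) ∨ ∃ j, dOdd j = x := by
  have hx := x.isLt
  obtain ⟨j, hj | hj⟩ := Nat.even_or_odd' x
  · exact Or.inl ⟨⟨j, by omega⟩, Fin.ext (by simp [hj])⟩
  · exact Or.inr ⟨⟨j, by omega⟩, Fin.ext (by simp [hj])⟩

lemma dOdd_ne_dEven (j k : Fin n) : dOdd j ≠ dEven k := fun h => by
  have := congrArg Fin.val h
  simp only [val_dOdd, val_dEven] at this
  omega

lemma dEven_injective : Function.Injective (dEven (n := n)) := fun j k h =>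
  Fin.ext (by simpa using congrArg Fin.val h)

lemma dOdd_injective : Function.Injective (dOdd (n := n)) := fun j k h =>
  Fin.ext (by simpa using congrArg Fin.val h)

@[simp] lemma meanderMap_dEven (π ρ : Setoid (Fin n)) (j : Fin n) :
    meanderMap π ρ (dEven j) = dOdd (prevP π j) := by
  simp [meanderMap]

@[simp] lemma meanderMap_dOdd (π ρ : Setoid (Fin n)) (j : Fin n) :
    meanderMap π ρ (dOdd j) = dEven (nextP ρ j) := by
  simp [meanderMap, Nat.mul_add_div]

/-- `meanderMap S S` is the pairing permutation `P_{A(S)}` of the doubling `A(S)`. -/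
lemma meanderMap_self_involutive : Function.Involutive (meanderMap S S) := by
  intro x
  rcases dEven_or_dOdd x with ⟨j, rfl⟩ | ⟨j, rfl⟩ <;> simp [prevP_nextP, nextP_prevP]

lemma meanderMap_self_ne (x : Fin (2*n)) : meanderMap S S x ≠ x := by
  rcases dEven_or_dOdd x with ⟨j, rfl⟩ | ⟨j, rfl⟩
  · simpa using dOdd_ne_dEven _ _
  · simpa using (dOdd_ne_dEven _ _).symm

lemma archSetoid_eq_orbitSetoid : archSetoid S = orbitSetoid (meanderMap S S) := by
  apply le_antisymm <;> apply Setoid.eqvGen_le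
  · rintro _ _ ⟨j, rfl, rfl⟩
    exact .rel _ _ (meanderMap_dOdd S S j)
  · rintro x _ rfl
    rcases dEven_or_dOdd x with ⟨j, rfl⟩ | ⟨j, rfl⟩
    · exact .symm _ _ (.rel _ _ ⟨prevP S j, by simp [nextP_prevP]⟩)
    · exact .rel _ _ ⟨j, rfl, by simp⟩

lemma archSetoid_rel_iff : (archSetoid S).r x y ↔ y = x ∨ y = meanderMap S S x := by
  rw [archSetoid_eq_orbitSetoid, orbitSetoid_rel_iff (meanderMap_self_involutive S)]

lemma isPairing_archSetoid : IsPairing (archSetoid S) := by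
  rw [archSetoid_eq_orbitSetoid]
  exact isPairing_orbitSetoid (meanderMap_self_involutive S) (meanderMap_self_ne S)

lemma isBlockUnion_archSetoid_iff {A : Set (Fin (2*n))} :
    IsBlockUnion (archSetoid S) A ↔ ∀ j, dOdd j ∈ A ↔ dEven (nextP S j) ∈ A := by
  constructor
  · intro h j
    have hrel : (archSetoid S).r (dOdd j) (dEven (nextP S j)) :=
      (archSetoid_rel_iff S).2 (Or.inr (meanderMap_dOdd S S j).symm)
    exact ⟨fun hj => h _ hj _ hrel, fun hj => h _ hj _ ((archSetoid S).symm hrel)⟩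
  · intro h
    rw [archSetoid_eq_orbitSetoid]
    refine isBlockUnion_orbitSetoid (meanderMap_self_involutive S).injective fun x hx => ?_
    rcases dEven_or_dOdd x with ⟨k, rfl⟩ | ⟨j, rfl⟩
    · rwa [meanderMap_dEven, h, nextP_prevP]
    · rwa [meanderMap_dOdd, ← h]

lemma isBlockUnion_archSetoid_Icc_dEven_dOdd_iff (a b : Fin n) :
    IsBlockUnion (archSetoid S) (Set.Icc (dEven a) (dOdd b)) ↔ IsBlockUnion S (Set.Icc a b) := by
  have hodd : ∀ j, dOdd j ∈ Set.Icc (dEven a) (dOdd b) ↔ j ∈ Set.Icc a b := fun j => by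
    simp only [Set.mem_Icc, Fin.le_def, val_dOdd, val_dEven]
    omega
  have heven : ∀ j, dEven j ∈ Set.Icc (dEven a) (dOdd b) ↔ j ∈ Set.Icc a b := fun j => by
    simp only [Set.mem_Icc, Fin.le_def, val_dOdd, val_dEven]
    omega
  rw [isBlockUnion_archSetoid_iff, isBlockUnion_iff_forall_nextP]
  simp only [hodd, heven]

lemma IsNC.isBlockUnion_archSetoid_Icc_dOdd_dEven_iff (hS : IsNC S) {s t : Fin n} (hst : s < t) :
    IsBlockUnion (archSetoid S) (Set.Icc (dOdd s) (dEven t)) ↔ S.r s t := by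
  have hodd : ∀ j, dOdd j ∈ Set.Icc (dOdd s) (dEven t) ↔ j ∈ Set.Ico s t := fun j => by
    simp only [Set.mem_Icc, Set.mem_Ico, Fin.le_def, Fin.lt_def, val_dOdd, val_dEven]
    omega
  have heven : ∀ j, dEven j ∈ Set.Icc (dOdd s) (dEven t) ↔ j ∈ Set.Ioc s t := fun j => by
    simp only [Set.mem_Icc, Set.mem_Ioc, Fin.le_def, Fin.lt_def, val_dOdd, val_dEven]
    omega
  simp only [isBlockUnion_archSetoid_iff, hodd, heven]
  exact ⟨fun h => rel_of_mapsTo_nextP S hst.le fun j hj => (h j).1 hj,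
    fun hr j => hS.mem_Ico_iff_nextP_mem_Ioc hr⟩

lemma isNC_archSetoid (hS : IsNC S) : IsNC (archSetoid S) := by
  refine isNC_of_isBlockUnion_Icc fun x y hxy hr => ?_
  rcases (archSetoid_rel_iff S).1 hr with rfl | rfl
  · exact absurd hxy (lt_irrefl _)
  rcases dEven_or_dOdd x with ⟨j, rfl⟩ | ⟨j, rfl⟩
  · rw [meanderMap_dEven, dEven_lt_dOdd_iff] at hxy
    rw [meanderMap_dEven, isBlockUnion_archSetoid_Icc_dEven_dOdd_iff]
    exact hS.isBlockUnion_Icc_prevP hxy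
  · rw [meanderMap_dOdd, dOdd_lt_dEven_iff] at hxy
    rw [meanderMap_dOdd, hS.isBlockUnion_archSetoid_Icc_dOdd_dEven_iff S hxy]
    exact rel_nextP S j

lemma archSetoid_injective : Function.Injective (archSetoid (n := n)) := by
  intro S T h
  refine eq_of_nextP_eq S (funext fun j => dEven_injective ?_)
  have hrel : (archSetoid T).r (dOdd j) (dEven (nextP S j)) := h ▸ .rel _ _ ⟨j, rfl, rfl⟩
  rw [archSetoid_rel_iff, meanderMap_dOdd] at hrel
  exact hrel.resolve_left (dOdd_ne_dEven _ _).symm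

end Doubling

section Undoubling

variable {n : ℕ} {σ : Setoid (Fin (2*n))}

noncomputable def halfPartner (hP : IsPairing σ) (j : Fin n) : Fin n :=
  ⟨(partner hP (dOdd j) : ℕ) / 2, by omega⟩

noncomputable def halfSetoid (hP : IsPairing σ) : Setoid (Fin n) :=
  orbitSetoid (halfPartner hP)

lemma dEven_halfPartner (hσ : IsNC σ) (hP : IsPairing σ) (j : Fin n) :
    dEven (halfPartner hP j) = partner hP (dOdd j) := by
  have hpar := hσ.val_mod_two_ne_of_isPairing hP (rel_partner hP (dOdd j)) (partner_ne hP _).symm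
  ext
  simp only [val_dOdd, val_dEven, halfPartner] at hpar ⊢
  omega

lemma rel_dOdd_dEven_halfPartner (hσ : IsNC σ) (hP : IsPairing σ) (j : Fin n) :
    σ.r (dOdd j) (dEven (halfPartner hP j)) := by
  rw [dEven_halfPartner hσ hP]
  exact rel_partner hP _

lemma halfPartner_injective (hσ : IsNC σ) (hP : IsPairing σ) :
    Function.Injective (halfPartner hP) := fun j k h =>
  dOdd_injective ((partner_involutive hP).injective (by
    rw [← dEven_halfPartner hσ hP, h, dEven_halfPartner hσ hP]))

lemma dOdd_mem_iff_dEven_halfPartner_mem (hσ : IsNC σ) (hP : IsPairing σ) {A : Set (Fin (2*n))}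
    (hA : IsBlockUnion σ A) (j : Fin n) : dOdd j ∈ A ↔ dEven (halfPartner hP j) ∈ A :=
  ⟨fun h => hA _ h _ (rel_dOdd_dEven_halfPartner hσ hP j),
    fun h => hA _ h _ (σ.symm (rel_dOdd_dEven_halfPartner hσ hP j))⟩

lemma nextP_halfSetoid (hσ : IsNC σ) (hP : IsPairing σ) :
    nextP (halfSetoid hP) = halfPartner hP := by
  funext j
  have hrel : (halfSetoid hP).r j (halfPartner hP j) := .rel _ _ rfl
  have harc := rel_dOdd_dEven_halfPartner hσ hP j
  rcases lt_or_ge j (halfPartner hP j) with hlt | hle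
  · -- the arc from `dOdd j` to `dEven (halfPartner hP j)` encloses every arc starting strictly
    -- inside it, so the orbit of `j` never enters `Ioo j (halfPartner hP j)`
    have hI := hσ.isBlockUnion_Icc_of_isPairing hP (dOdd_lt_dEven_iff.2 hlt) harc
    have hout : Set.MapsTo (halfPartner hP) (Set.Ioo j (halfPartner hP j))ᶜ
        (Set.Ioo j (halfPartner hP j))ᶜ := by
      intro l hl hfl
      have hiff := dOdd_mem_iff_dEven_halfPartner_mem hσ hP hI l
      have hne : (l : ℕ) ≠ j := Fin.val_injective.ne fun h => (h ▸ hfl).2.ne rfl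
      simp only [Set.mem_compl_iff, Set.mem_Ioo, Set.mem_Icc, Fin.le_def, Fin.lt_def, val_dOdd,
        val_dEven] at hiff hl hfl
      omega
    exact nextP_eq_of_lt _ hlt hrel fun l hl =>
      isBlockUnion_orbitSetoid (halfPartner_injective hσ hP) hout j (fun h => h.1.ne rfl) l hl
  · -- here the arc encloses every arc starting in `Icc (halfPartner hP j) j`
    have hI := hσ.isBlockUnion_Icc_of_isPairing hP (dEven_lt_dOdd_iff.2 hle) (σ.symm harc)
    have hin : Set.MapsTo (halfPartner hP) (Set.Icc (halfPartner hP j) j)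
        (Set.Icc (halfPartner hP j) j) := by
      intro l hl
      have hiff := dOdd_mem_iff_dEven_halfPartner_mem hσ hP hI l
      simp only [Set.mem_Icc, Fin.le_def, val_dOdd, val_dEven] at hiff hl ⊢
      omega
    exact nextP_eq_of_forall_mem_Icc _ hrel fun l hl =>
      isBlockUnion_orbitSetoid (halfPartner_injective hσ hP) hin j ⟨hle, le_rfl⟩ l hl

lemma isNC_halfSetoid (hσ : IsNC σ) (hP : IsPairing σ) : IsNC (halfSetoid hP) := by
  refine isNC_of_isBlockUnion_Ioo_nextP fun u hu => ?_
  rw [nextP_halfSetoid hσ hP] at hu ⊢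
  have hI := hσ.isBlockUnion_Icc_of_isPairing hP (dOdd_lt_dEven_iff.2 hu)
    (rel_dOdd_dEven_halfPartner hσ hP u)
  refine isBlockUnion_orbitSetoid (halfPartner_injective hσ hP) fun l hl => ?_
  have hiff := dOdd_mem_iff_dEven_halfPartner_mem hσ hP hI l
  have hne : (halfPartner hP l : ℕ) ≠ halfPartner hP u :=
    Fin.val_injective.ne ((halfPartner_injective hσ hP).ne hl.1.ne')
  simp only [Set.mem_Ioo, Set.mem_Icc, Fin.le_def, Fin.lt_def, val_dOdd, val_dEven] at hiff hl ⊢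
  omega

lemma archSetoid_halfSetoid (hσ : IsNC σ) (hP : IsPairing σ) :
    archSetoid (halfSetoid hP) = σ := by
  have hmap : meanderMap (halfSetoid hP) (halfSetoid hP) = partner hP := by
    funext x
    rcases dEven_or_dOdd x with ⟨k, rfl⟩ | ⟨j, rfl⟩
    · obtain ⟨j, rfl⟩ := Finite.injective_iff_surjective.1 (halfPartner_injective hσ hP) k
      rw [meanderMap_dEven, ← nextP_halfSetoid hσ hP, prevP_nextP, nextP_halfSetoid hσ hP,
        dEven_halfPartner hσ hP, partner_involutive]
    · rw [meanderMap_dOdd, nextP_halfSetoid hσ hP, dEven_halfPartner hσ hP]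
  exact Setoid.ext fun x y => by rw [archSetoid_rel_iff, hmap, ← rel_iff_partner hP]

end Undoubling

lemma exists_archSetoid_eq {n : ℕ} {σ : Setoid (Fin (2*n))} (hσ : IsNC σ) (hP : IsPairing σ) :
    ∃ S, IsNC S ∧ archSetoid S = σ :=
  ⟨halfSetoid hP, isNC_halfSetoid hσ hP, archSetoid_halfSetoid hσ hP⟩

lemma ncJoin_archSetoid_ne_top_iff {n : ℕ} {π ρ : Setoid (Fin n)} (hπ : IsNC π) (hρ : IsNC ρ) :
    ncJoin (archSetoid π) (archSetoid ρ) ≠ ⊤ ↔ ncJoin π ρ ≠ ⊤ ∨ π ⊓ ρ ≠ ⊥ := by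
  rw [ncJoin_ne_top_iff, ncJoin_ne_top_iff, inf_ne_bot_iff]
  constructor
  · rintro ⟨a, b, hab, hproper, hπA, hρA⟩
    -- a union of arcs has even length, so `a` and `b` have opposite parities
    have hpar := (isPairing_archSetoid π).val_mod_two_ne hab hπA
    rw [Fin.le_def] at hab
    rcases dEven_or_dOdd a with ⟨a, rfl⟩ | ⟨s, rfl⟩ <;>
      rcases dEven_or_dOdd b with ⟨t, rfl⟩ | ⟨b, rfl⟩ <;>
      simp only [val_dEven, val_dOdd] at hpar hab hproper
    · omega
    · rw [isBlockUnion_archSetoid_Icc_dEven_dOdd_iff] at hπA hρA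
      exact Or.inl ⟨a, b, Fin.le_def.2 (by omega), by omega, hπA, hρA⟩
    · have hst : s < t := Fin.lt_def.2 (by omega)
      exact Or.inr ⟨s, t, hst, (hπ.isBlockUnion_archSetoid_Icc_dOdd_dEven_iff π hst).1 hπA,
        (hρ.isBlockUnion_archSetoid_Icc_dOdd_dEven_iff ρ hst).1 hρA⟩
    · omega
  · rintro (⟨a, b, hab, hproper, hπA, hρA⟩ | ⟨s, t, hst, hπst, hρst⟩)
    · refine ⟨dEven a, dOdd b, ?_, ?_, (isBlockUnion_archSetoid_Icc_dEven_dOdd_iff π a b).2 hπA,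
        (isBlockUnion_archSetoid_Icc_dEven_dOdd_iff ρ a b).2 hρA⟩
      · simp only [Fin.le_def, val_dEven, val_dOdd] at hab ⊢
        omega
      · simp only [val_dEven, val_dOdd]
        omega
    · refine ⟨dOdd s, dEven t, ?_, Or.inl (by simp),
        (hπ.isBlockUnion_archSetoid_Icc_dOdd_dEven_iff π hst).2 hπst,
        (hρ.isBlockUnion_archSetoid_Icc_dOdd_dEven_iff ρ hst).2 hρst⟩
      simp only [Fin.lt_def, Fin.le_def, val_dEven, val_dOdd] at hst ⊢
      omega

lemma ncJoin_archSetoid_eq_top_iff {n : ℕ} {π ρ : Setoid (Fin n)} (hπ : IsNC π) (hρ : IsNC ρ) :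
    ncJoin (archSetoid π) (archSetoid ρ) = ⊤ ↔ ncJoin π ρ = ⊤ ∧ π ⊓ ρ = ⊥ := by
  rw [← not_iff_not, not_and_or]
  exact ncJoin_archSetoid_ne_top_iff hπ hρ

/-- The number of pairs `(σ,θ) ∈ NCP(2n)²` with `σ ∨ θ = 1_{2n}` (join in
`NC(2n)`) equals the number of irreducible meandric systems on `2n` bridges,
i.e. the number of pairs `(π,ρ) ∈ NC(n)²` with `π ∨ ρ = 1_n`, `π ∧ ρ = 0_n`. -/
theorem card_pairings_join_top_eq_mirr (n : ℕ) :
    Nat.card {pr : Setoid (Fin (2*n)) × Setoid (Fin (2*n)) //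
        (IsNC pr.1 ∧ IsPairing pr.1) ∧ (IsNC pr.2 ∧ IsPairing pr.2) ∧
        ncJoin pr.1 pr.2 = ⊤}
      = Nat.card {pr : Setoid (Fin n) × Setoid (Fin n) //
        IsNC pr.1 ∧ IsNC pr.2 ∧ ncJoin pr.1 pr.2 = ⊤ ∧ pr.1 ⊓ pr.2 = ⊥} := by
  refine (Nat.card_congr (Set.BijOn.equiv (Prod.map archSetoid archSetoid) ⟨?_, ?_, ?_⟩)).symm
  · rintro ⟨π, ρ⟩ ⟨hπ, hρ, hjoin, hmeet⟩
    exact ⟨⟨isNC_archSetoid π hπ, isPairing_archSetoid π⟩,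
      ⟨isNC_archSetoid ρ hρ, isPairing_archSetoid ρ⟩,
      (ncJoin_archSetoid_eq_top_iff hπ hρ).2 ⟨hjoin, hmeet⟩⟩
  · exact (archSetoid_injective.prodMap archSetoid_injective).injOn
  · rintro ⟨σ, θ⟩ ⟨⟨hσ, hσP⟩, ⟨hθ, hθP⟩, hjoin⟩
    obtain ⟨π, hπ, rfl⟩ := exists_archSetoid_eq hσ hσP
    obtain ⟨ρ, hρ, rfl⟩ := exists_archSetoid_eq hθ hθP
    exact ⟨(π, ρ), ⟨hπ, hρ, (ncJoin_archSetoid_eq_top_iff hπ hρ).1 hjoin⟩, rfl⟩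
end

section
/- For each t ∈ (0,∞), let ν_t: ℂ[X] → ℂ be the unital symmetric linear functional with ν_t(X^{2n}) = Σ_{k=1}^n m^{(k)}_n t^k, where m^{(k)}_n counts pairs (π,ρ) ∈ NC(n)² with M_{π,ρ} having exactly k orbits. Then for every p ∈ ℕ there is a polynomial Q_p ∈ ℤ[t] with Q_p(0) = 0 and Q_p'(0) = m^{(1)}_p such that κ_{2p}(ν_t) = Q_p(t) for all t > 0; consequently lim_{t→0} (1/t)·κ_{2p}(ν_t) = m^{(1)}_p. -/
open scoped Classical

/-!
By the moment-cumulant formula, `κ_n = m_n - ∑_{π ∈ NC(n), π ≠ 1_n} ∏_{B ∈ π} κ_{|B|}`.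
By strong induction every `κ_m` is a polynomial in `t` without constant term, so the product
over a partition with at least two blocks is divisible by `t²`. Hence `κ_n ≡ m_n (mod t²)`,
and the coefficient of `t` in `m_{2p}(t) = ∑_k m^{(k)}_p t^k` is `m^{(1)}_p`. The limit is the
derivative at `0` of the polynomial `Q_p`.
-/

open Polynomial Filter Topology

instance Setoid.finite {α : Type*} [Finite α] : Finite (Setoid α) :=
  Finite.of_injective (fun S : Setoid α => S.r) fun _ _ h =>
    Setoid.ext fun x y => iff_of_eq (congrFun (congrFun h x) y)

namespace Setoid

variable {α : Type*}

theorem classes_top [Nonempty α] : (⊤ : Setoid α).classes = {Set.univ} := by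
  ext s
  constructor
  · rintro ⟨y, rfl⟩
    ext x
    simp [top_def]
  · rintro rfl
    exact ⟨Classical.arbitrary α, by ext x; simp [top_def]⟩

theorem ssubset_univ_of_mem_classes {S : Setoid α} (hS : S ≠ ⊤) {B : Set α}
    (hB : B ∈ S.classes) : B ⊂ Set.univ := by
  refine Set.ssubset_univ_iff.2 fun hB_univ => hS (eq_top_iff.2 fun u v => ?_)
  obtain ⟨y, rfl⟩ := hB
  have hu : u ∈ {x | S x y} := hB_univ ▸ Set.mem_univ u
  have hv : v ∈ {x | S x y} := hB_univ ▸ Set.mem_univ v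
  exact S.trans' hu (S.symm' hv)

theorem exists_ne_mem_classes {S : Setoid α} (hS : S ≠ ⊤) :
    ∃ B ∈ S.classes, ∃ C ∈ S.classes, B ≠ C := by
  obtain ⟨a, b, hab⟩ : ∃ a b, ¬ S a b := by
    by_contra! h
    exact hS (eq_top_iff.2 h)
  refine ⟨{x | S x a}, S.mem_classes a, {x | S x b}, S.mem_classes b, fun h => hab ?_⟩
  exact (h ▸ S.refl' a : a ∈ {x | S x b})

theorem ncard_pos_of_mem_classes [Finite α] {S : Setoid α} {B : Set α}
    (hB : B ∈ S.classes) : 0 < B.ncard :=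
  (Set.ncard_pos B.toFinite).2 (nonempty_of_mem_partition S.isPartition_classes hB)

theorem ncard_lt_of_mem_classes [Finite α] {S : Setoid α} (hS : S ≠ ⊤) {B : Set α}
    (hB : B ∈ S.classes) : B.ncard < Nat.card α :=
  Set.ncard_univ α ▸ Set.ncard_lt_ncard (ssubset_univ_of_mem_classes hS hB)

end Setoid

theorem Finset.pow_card_dvd_prod_of_dvd {ι M : Type*} [CommMonoid M] {s : Finset ι}
    {f : ι → M} {a : M} (h : ∀ i ∈ s, a ∣ f i) : a ^ s.card ∣ ∏ i ∈ s, f i := by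
  simpa using Finset.prod_dvd_prod_of_dvd (fun _ => a) f h

theorem isNC_top (n : ℕ) : IsNC (⊤ : Setoid (Fin n)) :=
  fun _ _ _ _ _ _ _ _ _ => trivial

theorem MomCum.eq_add_sum_of_ne_top {F : Type*} [Field F] {mom κ : ℕ → F} (h : MomCum mom κ)
    {n : ℕ} (hn : 0 < n) :
    mom n = κ n + ∑ S ∈ (Set.toFinite {S : Setoid (Fin n) | IsNC S}).toFinset.erase ⊤,
      ∏ B ∈ (Set.toFinite S.classes).toFinset, κ B.ncard := by
  have : Nonempty (Fin n) := ⟨⟨0, hn⟩⟩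
  have hTop : (⊤ : Setoid (Fin n)) ∈ (Set.toFinite {S : Setoid (Fin n) | IsNC S}).toFinset := by
    simpa using isNC_top n
  rw [h n hn, finsum_mem_eq_finite_toFinset_sum _ (Set.toFinite _),
    ← Finset.add_sum_erase _ _ hTop, Setoid.classes_top, finprod_mem_singleton, Set.ncard_univ,
    Nat.card_fin]
  simp only [finprod_mem_eq_finite_toFinset_prod _ (Set.toFinite _)]

section CumulantPolynomials

variable {R F : Type*} [CommRing R] [Field F] [Algebra R F]

theorem exists_cumulant_poly_X_sq_dvd_sub_moment_poly {T : Set F} {mom κ : F → ℕ → F}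
    (M : ℕ → R[X]) (hM : ∀ n, 0 < n → X ∣ M n)
    (hmom : ∀ t ∈ T, ∀ n, 0 < n → mom t n = aeval t (M n))
    (hκ : ∀ t ∈ T, MomCum (mom t) (κ t)) (n : ℕ) (hn : 0 < n) :
    ∃ P : R[X], X ^ 2 ∣ P - M n ∧ ∀ t ∈ T, κ t n = aeval t P := by
  induction n using Nat.strong_induction_on with
  | _ n ih =>
  -- the smaller cumulants are polynomials divisible by `X`, since they agree with `M` mod `X ^ 2`
  have hsmaller : ∀ m, ∃ P : R[X], 0 < m → m < n → X ∣ P ∧ ∀ t ∈ T, κ t m = aeval t P := by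
    intro m
    by_cases hm : 0 < m ∧ m < n
    · obtain ⟨P, hPM, hP⟩ := ih m hm.2 hm.1
      refine ⟨P, fun _ _ => ⟨?_, hP⟩⟩
      simpa using dvd_add ((dvd_pow_self X two_ne_zero).trans hPM) (hM m hm.1)
    · exact ⟨0, fun h1 h2 => absurd ⟨h1, h2⟩ hm⟩
  choose K hK using hsmaller
  set NC' := (Set.toFinite {S : Setoid (Fin n) | IsNC S}).toFinset.erase ⊤
  have hK_classes : ∀ S ∈ NC', ∀ B ∈ (Set.toFinite S.classes).toFinset,
      X ∣ K B.ncard ∧ ∀ t ∈ T, κ t B.ncard = aeval t (K B.ncard) := by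
    intro S hS B hB
    rw [Set.Finite.mem_toFinset] at hB
    have hS_ne : S ≠ ⊤ := (Finset.mem_erase.1 hS).1
    exact hK _ (Setoid.ncard_pos_of_mem_classes hB)
      (by simpa using Setoid.ncard_lt_of_mem_classes hS_ne hB)
  refine ⟨M n - ∑ S ∈ NC', ∏ B ∈ (Set.toFinite S.classes).toFinset, K B.ncard, ?_, ?_⟩
  · -- a partition other than `⊤` has at least two blocks
    rw [sub_sub_cancel_left, dvd_neg]
    refine Finset.dvd_sum fun S hS => ?_
    obtain ⟨B, hB, C, hC, hBC⟩ := Setoid.exists_ne_mem_classes (Finset.mem_erase.1 hS).1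
    have htwo : 1 < (Set.toFinite S.classes).toFinset.card :=
      Finset.one_lt_card.2 ⟨B, by simpa using hB, C, by simpa using hC, hBC⟩
    exact (pow_dvd_pow X htwo).trans
      (Finset.pow_card_dvd_prod_of_dvd fun B hB => (hK_classes S hS B hB).1)
  · intro t ht
    rw [map_sub, map_sum, ← hmom t ht n hn, (hκ t ht).eq_add_sum_of_ne_top hn,
      add_sub_assoc, left_eq_add, sub_eq_zero]
    exact Finset.sum_congr rfl fun S hS => by
      rw [map_prod]
      exact Finset.prod_congr rfl fun B hB => (hK_classes S hS B hB).2 t ht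

end CumulantPolynomials

theorem Polynomial.tendsto_eval_div_self_nhdsNE {𝕜 : Type*} [NontriviallyNormedField 𝕜]
    {p : 𝕜[X]} (hp : p.coeff 0 = 0) :
    Tendsto (fun t => p.eval t / t) (𝓝[≠] 0) (𝓝 (p.coeff 1)) := by
  have := (p.hasDerivAt 0).tendsto_slope_zero
  simp only [zero_add, ← coeff_zero_eq_eval_zero, hp, sub_zero, coeff_derivative] at this
  simpa [div_eq_inv_mul] using this

noncomputable def evenMomentPoly (n : ℕ) : ℤ[X] :=
  ∑ k ∈ Finset.Icc 1 n, C (mcount n k : ℤ) * X ^ k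

/-- `ν_t(X^n)` as a polynomial in `t`. -/
noncomputable def momentPoly (n : ℕ) : ℤ[X] :=
  if Even n then evenMomentPoly (n / 2) else 0

theorem X_dvd_evenMomentPoly (n : ℕ) : X ∣ evenMomentPoly n :=
  Finset.dvd_sum fun k hk =>
    (dvd_pow_self X (by have := (Finset.mem_Icc.1 hk).1; omega)).mul_left _

theorem X_dvd_momentPoly (n : ℕ) : X ∣ momentPoly n := by
  unfold momentPoly
  split_ifs
  exacts [X_dvd_evenMomentPoly _, dvd_zero X]

theorem coeff_one_momentPoly_two_mul {p : ℕ} (hp : 0 < p) :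
    (momentPoly (2 * p)).coeff 1 = meanderNum p := by
  rw [momentPoly, if_pos (even_two_mul p), Nat.mul_div_cancel_left p two_pos, evenMomentPoly,
    finsetSum_coeff, Finset.sum_eq_single 1]
  · simp [meanderNum]
  · intro k _ hk
    simp [coeff_X_pow, Ne.symm hk]
  · intro h
    exact absurd (Finset.mem_Icc.2 ⟨le_rfl, hp⟩) h

theorem aeval_momentPoly {mom : ℕ → ℝ} {t : ℝ} (hodd : ∀ n : ℕ, 0 < n → mom (2 * n - 1) = 0)
    (heven : ∀ n : ℕ, 0 < n → mom (2 * n) = ∑ k ∈ Finset.Icc 1 n, (mcount n k : ℝ) * t ^ k)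
    (n : ℕ) (hn : 0 < n) : mom n = aeval t (momentPoly n) := by
  obtain ⟨m, rfl | rfl⟩ := Nat.even_or_odd' n
  · rw [heven m (by omega), momentPoly, if_pos (even_two_mul m),
      Nat.mul_div_cancel_left m two_pos, evenMomentPoly]
    simp
  · rw [momentPoly, if_neg (Nat.not_even_iff_odd.2 (odd_two_mul_add_one m)), map_zero,
      ← hodd (m + 1) (by omega)]
    rfl

open Filter in
theorem cumulants_of_nu_t_polynomial_general
    (mom : ℝ → ℕ → ℝ) (κ : ℝ → ℕ → ℝ)
    (hmomOdd : ∀ t : ℝ, ∀ n : ℕ, 0 < n → mom t (2*n - 1) = 0)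
    (hmomEven : ∀ t : ℝ, ∀ n : ℕ, 0 < n →
      mom t (2*n) = ∑ k ∈ Finset.Icc 1 n, (mcount n k : ℝ) * t ^ k)
    (hκ : ∀ t : ℝ, 0 < t → MomCum (mom t) (κ t)) :
    ∀ p : ℕ, 0 < p → ∃ Q : Polynomial ℤ,
      Q.coeff 0 = 0 ∧ Q.coeff 1 = (meanderNum p : ℤ) ∧
      (∀ t : ℝ, 0 < t → κ t (2*p) = (Q.map (Int.castRingHom ℝ)).eval t) ∧
      Tendsto (fun t : ℝ => κ t (2*p) / t)
        (nhdsWithin 0 (Set.Ioi 0)) (nhds (meanderNum p : ℝ)) := by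
  intro p hp
  obtain ⟨Q, hQM, hQ⟩ := exists_cumulant_poly_X_sq_dvd_sub_moment_poly (T := Set.Ioi 0)
    momentPoly (fun n _ => X_dvd_momentPoly n)
    (fun t _ => aeval_momentPoly (hmomOdd t) (hmomEven t)) hκ (2 * p) (by omega)
  have hcoeff : ∀ d < 2, Q.coeff d = (momentPoly (2 * p)).coeff d := fun d hd =>
    sub_eq_zero.1 (by simpa using X_pow_dvd_iff.1 hQM d hd)
  have hQ0 : Q.coeff 0 = 0 := (hcoeff 0 two_pos).trans (X_dvd_iff.1 (X_dvd_momentPoly _))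
  have hQ1 : Q.coeff 1 = meanderNum p :=
    (hcoeff 1 one_lt_two).trans (coeff_one_momentPoly_two_mul hp)
  have hκQ : ∀ t : ℝ, 0 < t → κ t (2 * p) = (Q.map (Int.castRingHom ℝ)).eval t := fun t ht => by
    rw [hQ t ht, ← eval_map_algebraMap, algebraMap_int_eq]
  refine ⟨Q, hQ0, hQ1, hκQ, ?_⟩
  have hlim := tendsto_eval_div_self_nhdsNE (p := Q.map (Int.castRingHom ℝ)) (by simp [hQ0])
  rw [coeff_map, hQ1] at hlim
  refine (hlim.mono_left (nhdsWithin_mono 0 fun t ht => ne_of_gt ht)).congr' ?_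
  filter_upwards [self_mem_nhdsWithin] with t ht
  rw [hκQ t ht]

open Filter in
/-- For `t > 0`, let `ν_t` be the symmetric functional with moments
`ν_t(X^{2n}) = Σ_{k=1}^n m^{(k)}_n t^k`.  For every `p ≥ 1` there is a
polynomial `Q_p ∈ ℤ[t]` with `Q_p(0) = 0` and `Q_p'(0) = m^{(1)}_p` such that
`κ_{2p}(ν_t) = Q_p(t)` for all `t > 0`; consequently
`lim_{t→0⁺} κ_{2p}(ν_t)/t = m^{(1)}_p`. -/
theorem cumulants_of_nu_t_polynomial
    (mom : ℝ → ℕ → ℝ) (κ : ℝ → ℕ → ℝ)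
    (hmom0 : ∀ t : ℝ, mom t 0 = 1)
    (hmomOdd : ∀ t : ℝ, ∀ n : ℕ, 0 < n → mom t (2*n - 1) = 0)
    (hmomEven : ∀ t : ℝ, ∀ n : ℕ, 0 < n →
      mom t (2*n) = ∑ k ∈ Finset.Icc 1 n, (mcount n k : ℝ) * t ^ k)
    (hκ : ∀ t : ℝ, 0 < t → MomCum (mom t) (κ t)) :
    ∀ p : ℕ, 0 < p → ∃ Q : Polynomial ℤ,
      Q.coeff 0 = 0 ∧ Q.coeff 1 = (meanderNum p : ℤ) ∧
      (∀ t : ℝ, 0 < t → κ t (2*p) = (Q.map (Int.castRingHom ℝ)).eval t) ∧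
      Tendsto (fun t : ℝ => κ t (2*p) / t)
        (nhdsWithin 0 (Set.Ioi 0)) (nhds (meanderNum p : ℝ)) :=
  cumulants_of_nu_t_polynomial_general mom κ hmomOdd hmomEven hκ
end
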